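/- arXiv:math/0610676 — 2 statements merged into one kernel-verified Lean document; each statement's English description precedes it below -/
import Mathlib

section
/- Every nonzero skew-adjoint endomorphism F of a 3-dimensional oriented real inner product space satisfying F³ + F = 0 is of the form F(x) = v × x for a unique unit vector v ∈ V. Hence the set of nonzero skew-adjoint f-structures on V is in bijection with the unit sphere of V. -/
/-- The standard inner product on `ℝ³`. -/
def dot3 (x y : Fin 3 → ℝ) : ℝ := ∑ i, x i * y i

/-- An endomorphism `A` of `ℝ³` is skew-adjoint if `⟨Ax, y⟩ = -⟨x, Ay⟩` for all `x, y`. -/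
def SkewAdj3 (A : (Fin 3 → ℝ) →ₗ[ℝ] (Fin 3 → ℝ)) : Prop :=
  ∀ x y, dot3 (A x) y = -dot3 x (A y)

/-- Every nonzero skew-adjoint endomorphism `F` of the 3-dimensional oriented inner product
space `ℝ³` satisfying `F³ + F = 0` equals `x ↦ v × x` for a unique unit vector `v`; hence
nonzero skew-adjoint f-structures are in bijection with the unit sphere. -/
theorem skewAdjoint_fStructure_eq_crossProduct
    (F : (Fin 3 → ℝ) →ₗ[ℝ] (Fin 3 → ℝ)) (hF0 : F ≠ 0) (hskew : SkewAdj3 F)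
    (hF : F ∘ₗ F ∘ₗ F + F = 0) :
    ∃! v : Fin 3 → ℝ, dot3 v v = 1 ∧ ∀ x, F x = crossProduct v x := by
  classical
  set e0 : Fin 3 → ℝ := ![1,0,0] with he0
  set e1 : Fin 3 → ℝ := ![0,1,0] with he1
  set e2 : Fin 3 → ℝ := ![0,0,1] with he2
  have hx : ∀ x : Fin 3 → ℝ, x = x 0 • e0 + x 1 • e1 + x 2 • e2 := by
    intro x; funext i; fin_cases i <;> simp [he0, he1, he2]
  set a : Fin 3 → ℝ := F e0 with ha
  set b : Fin 3 → ℝ := F e1 with hb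
  set c : Fin 3 → ℝ := F e2 with hc
  have h00 : a 0 = 0 := by
    have := hskew e0 e0
    simp [dot3, Fin.sum_univ_three, he0, ← ha] at this
    linarith
  have h11 : b 1 = 0 := by
    have := hskew e1 e1
    simp [dot3, Fin.sum_univ_three, he1, ← hb] at this
    linarith
  have h22 : c 2 = 0 := by
    have := hskew e2 e2
    simp [dot3, Fin.sum_univ_three, he2, ← hc] at this
    linarith
  have h01 : b 0 = -(a 1) := by
    have := hskew e0 e1
    simp [dot3, Fin.sum_univ_three, he0, he1, ← ha, ← hb] at this
    linarith
  have h02 : c 0 = -(a 2) := by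
    have := hskew e0 e2
    simp [dot3, Fin.sum_univ_three, he0, he2, ← ha, ← hc] at this
    linarith
  have h12 : c 1 = -(b 2) := by
    have := hskew e1 e2
    simp [dot3, Fin.sum_univ_three, he1, he2, ← hb, ← hc] at this
    linarith
  set v : Fin 3 → ℝ := ![b 2, -(a 2), a 1] with hv
  have hFx : ∀ x, F x = crossProduct v x := by
    intro x
    have hxx : F x = x 0 • a + x 1 • b + x 2 • c := by
      conv_lhs => rw [hx x]
      simp [ha, hb, hc]
    rw [hxx, cross_apply]
    funext i
    fin_cases i <;>
      simp [hv, h00, h11, h22, h01, h02, h12, Matrix.cons_val_zero, Matrix.cons_val_one] <;>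
      ring
  -- norm one
  obtain ⟨w, hw⟩ : ∃ x, F x ≠ 0 := by
    by_contra h
    push_neg at h
    exact hF0 (LinearMap.ext h)
  have hFw := LinearMap.congr_fun hF w
  simp only [LinearMap.add_apply, LinearMap.comp_apply, LinearMap.zero_apply] at hFw
  have key : (1 - dot3 v v) • F w = 0 := by
    have h3 : F (F (F w)) = -(dot3 v v) • F w := by
      rw [hFx (F (F w)), hFx (F w), hFx w]
      funext i
      fin_cases i <;>
        simp [cross_apply, dot3, Fin.sum_univ_three] <;> ring
    rw [h3] at hFw
    funext i
    have h := congrFun hFw i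
    simp only [Pi.add_apply, Pi.smul_apply, Pi.zero_apply, smul_eq_mul, neg_smul,
      Pi.neg_apply, neg_mul] at h
    simp only [Pi.smul_apply, smul_eq_mul, Pi.zero_apply]
    linear_combination h
  have hnorm : dot3 v v = 1 := by
    rcases smul_eq_zero.mp key with h | h
    · linarith [sub_eq_zero.mp (by linarith [h] : (1 : ℝ) - dot3 v v = 0)]
    · exact absurd h hw
  refine ⟨v, ⟨hnorm, hFx⟩, ?_⟩
  rintro u ⟨-, hu⟩
  have hcr : ∀ x, crossProduct u x = crossProduct v x := fun x => (hu x).symm.trans (hFx x)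
  funext i
  fin_cases i
  · have := congrFun (hcr e1) 2
    simpa [cross_apply, he1, hv] using this
  · have := congrFun (hcr e2) 0
    simpa [cross_apply, he2, hv] using this
  · have := congrFun (hcr e0) 1
    simpa [cross_apply, he0, hv] using this
end

section
/- Let V be a 4-dimensional oriented real inner product space and let J, K be orthogonal complex structures on V (J² = K² = −Id, both orthogonal) whose associated 2-forms ω_J, ω_K are both self-dual. Then JK + KJ = −2⟨J,K⟩ Id, where ⟨J,K⟩ = (1/4)trace(J K*) = −(1/4)trace(JK). -/
open Matrix

/-- The Levi-Civita symbol on `Fin 4`, as the determinant of the matrix of standard basis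
vectors. -/
noncomputable def eps4 (i j k l : Fin 4) : ℝ :=
  Matrix.det (Matrix.of ![(Pi.single i 1 : Fin 4 → ℝ), Pi.single j 1,
    Pi.single k 1, Pi.single l 1])

/-- The Hodge star operator on 2-forms on the oriented Euclidean space `ℝ⁴`, with 2-forms
identified with their component matrices `M i j = ω(eᵢ, eⱼ)`:
`(*ω)ᵢⱼ = (1/2) εᵢⱼₖₗ ωₖₗ`. -/
noncomputable def hodgeStar2 : Matrix (Fin 4) (Fin 4) ℝ →ₗ[ℝ] Matrix (Fin 4) (Fin 4) ℝ where
  toFun M := Matrix.of fun i j => (1 / 2) * ∑ k, ∑ l, eps4 i j k l * M k l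
  map_add' M N := by
    funext i j
    simp only [Matrix.of_apply, Matrix.add_apply, mul_add, Finset.sum_add_distrib]
  map_smul' c M := by
    funext i j
    simp only [Matrix.of_apply, Matrix.smul_apply, smul_eq_mul, RingHom.id_apply,
      Finset.mul_sum]
    congr 1
    ext k
    congr 1
    ext l
    ring
/-!
Self-duality of `Jᵀ` forces `J` to be skew with `J 1 0 = J 3 2`, `J 2 0 = J 1 3` and
`J 3 0 = J 2 1`, i.e. `J` is the matrix of left multiplication by an imaginary quaternion `p`
on `ℍ = ℝ⁴`. For imaginary quaternions `pq + qp = -2⟨p, q⟩`, and `trace (L_p L_q) = -4⟨p, q⟩`.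
-/

theorem eps4_swap (i j k l : Fin 4) : eps4 j i k l = -eps4 i j k l := by
  have := Matrix.det_permute (Equiv.swap 0 1)
    (Matrix.of ![(Pi.single i 1 : Fin 4 → ℝ), Pi.single j 1, Pi.single k 1, Pi.single l 1])
  rw [Equiv.Perm.sign_swap (by decide), Units.val_neg, Units.val_one, Int.cast_neg, Int.cast_one,
    neg_one_mul] at this
  rw [eps4, eps4, ← this]
  congr 1
  ext a b
  fin_cases a <;> rfl

theorem hodgeStar2_apply (M : Matrix (Fin 4) (Fin 4) ℝ) (i j : Fin 4) :
    hodgeStar2 M i j = 1 / 2 * ∑ k, ∑ l, eps4 i j k l * M k l :=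
  rfl

theorem hodgeStar2_transpose (M : Matrix (Fin 4) (Fin 4) ℝ) :
    (hodgeStar2 M)ᵀ = -hodgeStar2 M := by
  ext i j
  simp only [transpose_apply, Matrix.neg_apply, hodgeStar2_apply, eps4_swap i j, neg_mul,
    Finset.sum_neg_distrib, mul_neg]

theorem hodgeStar2_apply_zero (M : Matrix (Fin 4) (Fin 4) ℝ) :
    hodgeStar2 M 0 1 = (M 2 3 - M 3 2) / 2 ∧ hodgeStar2 M 0 2 = (M 3 1 - M 1 3) / 2 ∧
      hodgeStar2 M 0 3 = (M 1 2 - M 2 1) / 2 := by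
  refine ⟨?_, ?_, ?_⟩ <;>
    simp [hodgeStar2_apply, eps4, det_succ_row_zero, Fin.sum_univ_succ, Pi.single_apply,
      submatrix_apply, Fin.succAbove, div_eq_inv_mul, ← sub_eq_add_neg]

/-- The matrix of left multiplication by `a i + b j + c k` on `ℍ`, in the basis `1, i, j, k`. -/
def imQuaternionLeftMul (a b c : ℝ) : Matrix (Fin 4) (Fin 4) ℝ :=
  !![0, -a, -b, -c; a, 0, -c, b; b, c, 0, -a; c, -b, a, 0]

theorem eq_imQuaternionLeftMul_of_hodgeStar2_transpose {M : Matrix (Fin 4) (Fin 4) ℝ}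
    (h : hodgeStar2 Mᵀ = Mᵀ) : M = imQuaternionLeftMul (M 1 0) (M 2 0) (M 3 0) := by
  have skew : ∀ i j, M j i = -M i j := fun i j => by
    simpa [h] using congrFun (congrFun (hodgeStar2_transpose Mᵀ) j) i
  obtain ⟨h01, h02, h03⟩ := hodgeStar2_apply_zero Mᵀ
  simp only [h, transpose_apply] at h01 h02 h03
  ext i j
  fin_cases i <;> fin_cases j <;> simp [imQuaternionLeftMul] <;>
    linarith [skew 0 0, skew 1 1, skew 2 2, skew 3 3, skew 0 1, skew 0 2, skew 0 3, skew 1 2,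
      skew 1 3, skew 2 3]

theorem imQuaternionLeftMul_anticomm (a b c a' b' c' : ℝ) :
    imQuaternionLeftMul a b c * imQuaternionLeftMul a' b' c' +
        imQuaternionLeftMul a' b' c' * imQuaternionLeftMul a b c =
      (-2 * (a * a' + b * b' + c * c')) • (1 : Matrix (Fin 4) (Fin 4) ℝ) := by
  ext i j
  fin_cases i <;> fin_cases j <;> simp [imQuaternionLeftMul, one_apply] <;> ring

theorem trace_imQuaternionLeftMul_mul (a b c a' b' c' : ℝ) :
    trace (imQuaternionLeftMul a b c * imQuaternionLeftMul a' b' c') =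
      -4 * (a * a' + b * b' + c * c') := by
  simp [imQuaternionLeftMul, trace, Fin.sum_univ_four]
  ring

theorem selfDual_complexStructures_anticommutator_general
    (J K : Matrix (Fin 4) (Fin 4) ℝ)
    (hJsd : hodgeStar2 Jᵀ = Jᵀ) (hKsd : hodgeStar2 Kᵀ = Kᵀ) :
    J * K + K * J = (-2 * (-(1 / 4) * Matrix.trace (J * K))) • (1 : Matrix (Fin 4) (Fin 4) ℝ) := by
  rw [eq_imQuaternionLeftMul_of_hodgeStar2_transpose hJsd,
    eq_imQuaternionLeftMul_of_hodgeStar2_transpose hKsd, imQuaternionLeftMul_anticomm,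
    trace_imQuaternionLeftMul_mul]
  ring_nf

/-- Let `J`, `K` be orthogonal complex structures on the 4-dimensional oriented Euclidean
space `ℝ⁴` whose associated 2-forms (with component matrices `Jᵀ`, `Kᵀ`) are both self-dual.
Then `JK + KJ = -2⟨J, K⟩ Id`, where `⟨J, K⟩ = -(1/4) trace (JK)`. -/
theorem selfDual_complexStructures_anticommutator
    (J K : Matrix (Fin 4) (Fin 4) ℝ)
    (hJo : Jᵀ * J = 1) (hJ2 : J * J = -1)
    (hKo : Kᵀ * K = 1) (hK2 : K * K = -1)
    (hJsd : hodgeStar2 Jᵀ = Jᵀ) (hKsd : hodgeStar2 Kᵀ = Kᵀ) :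
    J * K + K * J = (-2 * (-(1 / 4) * Matrix.trace (J * K))) • (1 : Matrix (Fin 4) (Fin 4) ℝ) :=
  selfDual_complexStructures_anticommutator_general J K hJsd hKsd
end
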